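/- If time t is a strong i-node of order m−t for x_{1:m} (with 1 ≤ t < m), then for every n ≥ m, every continuation x_{m+1:n}, and every Viterbi path v of x_{1:n} with p(x_{1:n},v) > 0, one has v_t = i. In particular, at a strong node the Viterbi path passes through state i regardless of the tie-breaking scheme. -/
import Mathlib


open scoped BigOperators

namespace PMMViterbi

variable {𝒳 𝒴 : Type*} [Fintype 𝒴] [Nonempty 𝒴]

/-- Product of transition weights `∏_{k=t+1}^{n} q(x_k, y_k | x_{k-1}, y_{k-1})`
along the path `y`, for observations `x` (sequences are indexed starting from 1). -/
noncomputable def prodQ (q : 𝒳 × 𝒴 → 𝒳 × 𝒴 → ℝ) (x : ℕ → 𝒳) (y : ℕ → 𝒴) (t n : ℕ) : ℝ :=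
  ∏ k ∈ Finset.Ioc t n, q (x k, y k) (x (k - 1), y (k - 1))

/-- `p(x_{1:n}, y_{1:n}) = p₁(x₁,y₁) · ∏_{k=2}^n q(x_k,y_k|x_{k-1},y_{k-1})`. -/
noncomputable def pJoint (q : 𝒳 × 𝒴 → 𝒳 × 𝒴 → ℝ) (p1 : 𝒳 × 𝒴 → ℝ)
    (x : ℕ → 𝒳) (y : ℕ → 𝒴) (n : ℕ) : ℝ :=
  p1 (x 1, y 1) * prodQ q x y 1 n

/-- `δ_t(i)`: the maximum of `p(x_{1:t}, y_{1:t})` over paths with `y_t = i`. -/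
noncomputable def delta (q : 𝒳 × 𝒴 → 𝒳 × 𝒴 → ℝ) (p1 : 𝒳 × 𝒴 → ℝ)
    (x : ℕ → 𝒳) (t : ℕ) (i : 𝒴) : ℝ :=
  ⨆ (y : ℕ → 𝒴) (_ : y t = i), pJoint q p1 x y t

/-- `p_{ij}(x_{t:n})`: the maximum of `∏_{k=t+1}^n q(x_k,y_k|x_{k-1},y_{k-1})`
over paths with `y_t = i` and `y_n = j`. -/
noncomputable def pTrans (q : 𝒳 × 𝒴 → 𝒳 × 𝒴 → ℝ) (x : ℕ → 𝒳) (t n : ℕ) (i j : 𝒴) : ℝ :=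
  ⨆ (y : ℕ → 𝒴) (_ : y t = i ∧ y n = j), prodQ q x y t n

/-- Time `t` is an `i`-node of order `m - t` for `x_{1:m}`. -/
def IsNode (q : 𝒳 × 𝒴 → 𝒳 × 𝒴 → ℝ) (p1 : 𝒳 × 𝒴 → ℝ)
    (x : ℕ → 𝒳) (t m : ℕ) (i : 𝒴) : Prop :=
  ∀ j k : 𝒴, delta q p1 x t k * pTrans q x t m k j ≤ delta q p1 x t i * pTrans q x t m i j

/-- Time `t` is a strong `i`-node of order `m - t` for `x_{1:m}`. -/
def IsStrongNode (q : 𝒳 × 𝒴 → 𝒳 × 𝒴 → ℝ) (p1 : 𝒳 × 𝒴 → ℝ)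
    (x : ℕ → 𝒳) (t m : ℕ) (i : 𝒴) : Prop :=
  IsNode q p1 x t m i ∧
    ∀ j k : 𝒴, k ≠ i → 0 < delta q p1 x t i * pTrans q x t m i j →
      delta q p1 x t k * pTrans q x t m k j < delta q p1 x t i * pTrans q x t m i j

/-- `v` is a Viterbi path of `x_{1:n}`: it maximizes `y ↦ p(x_{1:n}, y_{1:n})`. -/
def IsViterbi (q : 𝒳 × 𝒴 → 𝒳 × 𝒴 → ℝ) (p1 : 𝒳 × 𝒴 → ℝ)
    (x : ℕ → 𝒳) (n : ℕ) (v : ℕ → 𝒴) : Prop :=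
  ∀ y : ℕ → 𝒴, pJoint q p1 x y n ≤ pJoint q p1 x v n

/-- `v` is an infinite Viterbi path of `x_{1:∞}`: for every `t ≥ 1` there is `m ≥ t`
such that for every `n ≥ m` some Viterbi path of `x_{1:n}` agrees with `v`
on coordinates `1, …, t`. -/
def IsInfViterbi (q : 𝒳 × 𝒴 → 𝒳 × 𝒴 → ℝ) (p1 : 𝒳 × 𝒴 → ℝ)
    (x : ℕ → 𝒳) (v : ℕ → 𝒴) : Prop :=
  ∀ t : ℕ, 1 ≤ t → ∃ m : ℕ, t ≤ m ∧ ∀ n : ℕ, m ≤ n →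
    ∃ w : ℕ → 𝒴, IsViterbi q p1 x n w ∧ ∀ s : ℕ, 1 ≤ s → s ≤ t → w s = v s

section Aux

variable (q : 𝒳 × 𝒴 → 𝒳 × 𝒴 → ℝ) (p1 : 𝒳 × 𝒴 → ℝ)

lemma prodQ_nonneg (hq : ∀ z z' : 𝒳 × 𝒴, 0 ≤ q z z') (x : ℕ → 𝒳) (y : ℕ → 𝒴) (t n : ℕ) :
    0 ≤ prodQ q x y t n :=
  Finset.prod_nonneg fun _ _ => hq _ _

lemma pJoint_nonneg (hq : ∀ z z' : 𝒳 × 𝒴, 0 ≤ q z z') (hp1 : ∀ z : 𝒳 × 𝒴, 0 ≤ p1 z)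
    (x : ℕ → 𝒳) (y : ℕ → 𝒴) (n : ℕ) : 0 ≤ pJoint q p1 x y n :=
  mul_nonneg (hp1 _) (prodQ_nonneg q hq x y 1 n)

lemma prodQ_congr {x x' : ℕ → 𝒳} {y y' : ℕ → 𝒴} {t n : ℕ}
    (hx : ∀ k, t ≤ k → k ≤ n → x k = x' k) (hy : ∀ k, t ≤ k → k ≤ n → y k = y' k) :
    prodQ q x y t n = prodQ q x' y' t n := by
  unfold prodQ
  refine Finset.prod_congr rfl fun k hk => ?_
  simp only [Finset.mem_Ioc] at hk
  rw [hx k (by omega) hk.2, hy k (by omega) hk.2,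
    hx (k - 1) (by omega) (by omega), hy (k - 1) (by omega) (by omega)]

lemma pJoint_congr {x x' : ℕ → 𝒳} {y y' : ℕ → 𝒴} {n : ℕ}
    (hx : ∀ k, 1 ≤ k → k ≤ n → x k = x' k) (hy : ∀ k, 1 ≤ k → k ≤ n → y k = y' k)
    (hn : 1 ≤ n) :
    pJoint q p1 x y n = pJoint q p1 x' y' n := by
  unfold pJoint
  rw [hx 1 le_rfl hn, hy 1 le_rfl hn, prodQ_congr q hx hy]

lemma prodQ_split (x : ℕ → 𝒳) (y : ℕ → 𝒴) {a b c : ℕ} (hab : a ≤ b) (hbc : b ≤ c) :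
    prodQ q x y a c = prodQ q x y a b * prodQ q x y b c :=
  (Finset.prod_Ioc_consecutive _ hab hbc).symm

/-- A supremum of a nonnegative function of paths that depends only on the first `N+1`
coordinates, restricted to a constraint that also depends on those coordinates,
is attained. -/
lemma exists_argmax (f : (ℕ → 𝒴) → ℝ) (C : (ℕ → 𝒴) → Prop) (N : ℕ)
    (hf0 : ∀ y, 0 ≤ f y)
    (hf : ∀ y y' : ℕ → 𝒴, (∀ k, k ≤ N → y k = y' k) → f y = f y')
    (hC : ∀ y y' : ℕ → 𝒴, (∀ k, k ≤ N → y k = y' k) → C y → C y')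
    (hex : ∃ y, C y) :
    ∃ y₀, C y₀ ∧ (∀ y, C y → f y ≤ f y₀) ∧ (⨆ (y : ℕ → 𝒴) (_ : C y), f y) = f y₀ := by
  classical
  set e : (Fin (N + 1) → 𝒴) → (ℕ → 𝒴) := fun g k => g ⟨min k N, by omega⟩ with he_def
  have he : ∀ (y : ℕ → 𝒴) (k : ℕ), k ≤ N → e (fun j => y j) k = y k := by
    intro y k hk
    simp only [he_def]
    congr 1
    omega
  obtain ⟨y₁, hy₁⟩ := hex
  set s : Finset (Fin (N + 1) → 𝒴) := Finset.univ.filter (fun g => C (e g)) with hs_def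
  have hy₁s : (fun j : Fin (N + 1) => y₁ j) ∈ s := by
    simp only [hs_def, Finset.mem_filter, Finset.mem_univ, true_and]
    exact hC y₁ _ (fun k hk => (he y₁ k hk).symm) hy₁
  obtain ⟨g₀, hg₀s, hg₀max⟩ := s.exists_max_image (fun g => f (e g)) ⟨_, hy₁s⟩
  have hg₀C : C (e g₀) := by
    simpa only [hs_def, Finset.mem_filter, Finset.mem_univ, true_and] using hg₀s
  refine ⟨e g₀, hg₀C, ?_, ?_⟩
  · intro y hy
    have hmem : (fun j : Fin (N + 1) => y j) ∈ s := by
      simp only [hs_def, Finset.mem_filter, Finset.mem_univ, true_and]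
      exact hC y _ (fun k hk => (he y k hk).symm) hy
    calc f y = f (e fun j : Fin (N + 1) => y j) := hf _ _ fun k hk => (he y k hk).symm
      _ ≤ f (e g₀) := hg₀max _ hmem
  · have hmax : ∀ y, C y → f y ≤ f (e g₀) := by
      intro y hy
      have hmem : (fun j : Fin (N + 1) => y j) ∈ s := by
        simp only [hs_def, Finset.mem_filter, Finset.mem_univ, true_and]
        exact hC y _ (fun k hk => (he y k hk).symm) hy
      calc f y = f (e fun j : Fin (N + 1) => y j) := hf _ _ fun k hk => (he y k hk).symm
        _ ≤ f (e g₀) := hg₀max _ hmem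
    have hub : ∀ y : ℕ → 𝒴, (⨆ (_ : C y), f y) ≤ f (e g₀) := by
      intro y
      by_cases hy : C y
      · rw [ciSup_pos hy]; exact hmax y hy
      · haveI : IsEmpty (C y) := ⟨hy⟩
        rw [Real.iSup_of_isEmpty]
        exact hf0 _
    refine le_antisymm (ciSup_le hub) ?_
    calc f (e g₀) = ⨆ (_ : C (e g₀)), f (e g₀) := by rw [ciSup_pos hg₀C]
      _ ≤ ⨆ (y : ℕ → 𝒴) (_ : C y), f y :=
        le_ciSup ⟨f (e g₀), by rintro r ⟨y, rfl⟩; exact hub y⟩ (e g₀)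

lemma delta_spec (hq : ∀ z z' : 𝒳 × 𝒴, 0 ≤ q z z') (hp1 : ∀ z : 𝒳 × 𝒴, 0 ≤ p1 z)
    (x : ℕ → 𝒳) {t : ℕ} (ht : 1 ≤ t) (i : 𝒴) :
    ∃ y₀ : ℕ → 𝒴, y₀ t = i ∧ (∀ y : ℕ → 𝒴, y t = i → pJoint q p1 x y t ≤ pJoint q p1 x y₀ t) ∧
      delta q p1 x t i = pJoint q p1 x y₀ t := by
  obtain ⟨y₀, h1, h2, h3⟩ := exists_argmax (fun y => pJoint q p1 x y t) (fun y => y t = i) t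
    (fun y => pJoint_nonneg q p1 hq hp1 x y t)
    (fun y y' h => pJoint_congr q p1 (fun _ _ _ => rfl) (fun k hk1 hk2 => h k hk2) ht)
    (fun y y' h hy => (h t le_rfl).symm.trans hy)
    ⟨fun _ => i, rfl⟩
  exact ⟨y₀, h1, h2, h3⟩

lemma pTrans_spec (hq : ∀ z z' : 𝒳 × 𝒴, 0 ≤ q z z')
    (x : ℕ → 𝒳) {t m : ℕ} (htm : t < m) (i j : 𝒴) :
    ∃ y₀ : ℕ → 𝒴, y₀ t = i ∧ y₀ m = j ∧
      (∀ y : ℕ → 𝒴, y t = i → y m = j → prodQ q x y t m ≤ prodQ q x y₀ t m) ∧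
      pTrans q x t m i j = prodQ q x y₀ t m := by
  obtain ⟨y₀, ⟨h1, h1'⟩, h2, h3⟩ := exists_argmax (fun y => prodQ q x y t m)
    (fun y => y t = i ∧ y m = j) m
    (fun y => prodQ_nonneg q hq x y t m)
    (fun y y' h => prodQ_congr q (fun _ _ _ => rfl) (fun k _ hk2 => h k hk2))
    (fun y y' h hy => ⟨(h t htm.le).symm.trans hy.1, (h m le_rfl).symm.trans hy.2⟩)
    ⟨fun k => if k = m then j else i, by simp [Nat.ne_of_lt htm], by simp⟩
  exact ⟨y₀, h1, h1', fun y hy1 hy2 => h2 y ⟨hy1, hy2⟩, h3⟩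

end Aux

/-- if `t` is a strong `i`-node of order `m - t` for `x_{1:m}`, then for
every `n ≥ m`, every continuation `x'` of `x_{1:m}`, and every Viterbi path `v` of
`x'_{1:n}` with `p(x'_{1:n}, v) > 0`, one has `v_t = i`. -/
theorem viterbi_through_strong_node (q : 𝒳 × 𝒴 → 𝒳 × 𝒴 → ℝ) (p1 : 𝒳 × 𝒴 → ℝ)
    (hq : ∀ z z' : 𝒳 × 𝒴, 0 ≤ q z z') (hp1 : ∀ z : 𝒳 × 𝒴, 0 ≤ p1 z)
    (x : ℕ → 𝒳) (t m : ℕ) (ht : 1 ≤ t) (htm : t < m) (i : 𝒴)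
    (hnode : IsStrongNode q p1 x t m i) :
    ∀ x' : ℕ → 𝒳, (∀ k : ℕ, k ≤ m → x' k = x k) → ∀ n : ℕ, m ≤ n →
      ∀ v : ℕ → 𝒴, IsViterbi q p1 x' n v → 0 < pJoint q p1 x' v n → v t = i := by
  classical
  intro x' hx' n hn v hvit hpos
  by_contra hne
  have htm' : t ≤ m := htm.le
  have htn : t ≤ n := htm'.trans hn
  set j := v m with hj
  -- decomposition of pJoint along 1 ≤ t ≤ m ≤ n
  have hdec : ∀ y : ℕ → 𝒴, pJoint q p1 x' y n
      = pJoint q p1 x' y t * prodQ q x' y t m * prodQ q x' y m n := by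
    intro y
    unfold pJoint
    rw [prodQ_split q x' y ht htn, prodQ_split q x' y htm' hn]
    ring
  -- positivity of the three factors of v
  set A := pJoint q p1 x' v t with hA_def
  set B := prodQ q x' v t m with hB_def
  set C := prodQ q x' v m n with hC_def
  have hA0 : 0 ≤ A := pJoint_nonneg q p1 hq hp1 x' v t
  have hB0 : 0 ≤ B := prodQ_nonneg q hq x' v t m
  have hC0 : 0 ≤ C := prodQ_nonneg q hq x' v m n
  rw [hdec v] at hpos
  have habc : 0 < A * B * C := hpos
  have hABpos : 0 < A * B := by
    rcases mul_pos_iff.mp habc with ⟨h1, _⟩ | ⟨_, h2⟩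
    · exact h1
    · linarith
  have hC : 0 < C := by
    rcases mul_pos_iff.mp habc with ⟨_, h2⟩ | ⟨_, h2⟩
    · exact h2
    · linarith
  have hA : 0 < A := by
    rcases mul_pos_iff.mp hABpos with ⟨h1, _⟩ | ⟨_, h2⟩
    · exact h1
    · linarith
  have hB : 0 < B := by
    rcases mul_pos_iff.mp hABpos with ⟨_, h2⟩ | ⟨_, h2⟩
    · exact h2
    · linarith
  -- transfer A and B to the original observations x
  have hAx : A = pJoint q p1 x v t :=
    pJoint_congr q p1 (fun k _ h2 => hx' k (h2.trans htm')) (fun _ _ _ => rfl) ht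
  have hBx : B = prodQ q x v t m :=
    prodQ_congr q (fun k _ h2 => hx' k h2) (fun _ _ _ => rfl)
  -- bound A, B by delta and pTrans at state v t
  obtain ⟨yk, hykt, hykmax, hykval⟩ := delta_spec q p1 hq hp1 x ht (v t)
  have hAle : A ≤ delta q p1 x t (v t) := by
    rw [hAx, hykval]; exact hykmax v rfl
  obtain ⟨zk, hzkt, hzkm, hzkmax, hzkval⟩ := pTrans_spec q hq x htm (v t) j
  have hBle : B ≤ pTrans q x t m (v t) j := by
    rw [hBx, hzkval]; exact hzkmax v rfl hj
  have hDk0 : 0 ≤ delta q p1 x t (v t) := hA0.trans hAle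
  have hPk0 : 0 ≤ pTrans q x t m (v t) j := hB0.trans hBle
  have hABle : A * B ≤ delta q p1 x t (v t) * pTrans q x t m (v t) j :=
    mul_le_mul hAle hBle hB0 hDk0
  -- the i-side is positive, hence strictly larger
  have hipos : 0 < delta q p1 x t i * pTrans q x t m i j :=
    lt_of_lt_of_le (lt_of_lt_of_le (mul_pos hA hB) hABle) (hnode.1 j (v t))
  have hstrict : delta q p1 x t (v t) * pTrans q x t m (v t) j
      < delta q p1 x t i * pTrans q x t m i j := hnode.2 j (v t) hne hipos
  -- construct the competitor path
  obtain ⟨y₃, hy₃t, _, hy₃val⟩ := delta_spec q p1 hq hp1 x ht i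
  obtain ⟨y₄, hy₄t, hy₄m, _, hy₄val⟩ := pTrans_spec q hq x htm i j
  set w : ℕ → 𝒴 := fun k => if k ≤ t then y₃ k else if k ≤ m then y₄ k else v k with hw_def
  have hw1 : pJoint q p1 x' w t = delta q p1 x t i := by
    rw [hy₃val]
    exact pJoint_congr q p1 (fun k _ h2 => hx' k (h2.trans htm'))
      (fun k _ h2 => by simp only [hw_def, if_pos h2]) ht
  have hw2 : prodQ q x' w t m = pTrans q x t m i j := by
    rw [hy₄val]
    refine prodQ_congr q (fun k _ h2 => hx' k h2) (fun k h1 h2 => ?_)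
    by_cases h : k ≤ t
    · have hk : k = t := le_antisymm h h1
      subst hk
      simp only [hw_def, if_pos le_rfl]
      rw [hy₃t, hy₄t]
    · simp only [hw_def, if_neg h, if_pos h2]
  have hw3 : prodQ q x' w m n = C := by
    refine prodQ_congr q (fun _ _ _ => rfl) (fun k h1 h2 => ?_)
    by_cases h : k ≤ t
    · omega
    · by_cases h' : k ≤ m
      · have hk : k = m := le_antisymm h' h1
        subst hk
        simp only [hw_def, if_neg h, if_pos le_rfl]
        rw [hy₄m, hj]
      · simp only [hw_def, if_neg h, if_neg h']
  -- contradiction with optimality of v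
  have hwv := hvit w
  rw [hdec w, hdec v, hw1, hw2, hw3] at hwv
  have hlt : A * B * C < delta q p1 x t i * pTrans q x t m i j * C :=
    mul_lt_mul_of_pos_right (lt_of_le_of_lt hABle hstrict) hC
  linarith

end PMMViterbi
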